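/- Let Q be a positive semidefinite operator supported on the antisymmetric subspace H₋ of H⊗H, and let Q̃ = tr₁(Q) + tr₂(Q). Then Q̃² ≤ (1/2)·tr(Q̃)·Q̃ as operators. -/

import Mathlib

open Matrix Kronecker ComplexOrder BigOperators

/-- The swap operator `V` on `ℂ^d ⊗ ℂ^d`, `V(x ⊗ y) = y ⊗ x`. -/
noncomputable def swapOp (d : ℕ) : Matrix (Fin d × Fin d) (Fin d × Fin d) ℂ :=
  fun p q => if p.1 = q.2 ∧ p.2 = q.1 then 1 else 0

/-- Projector onto the symmetric subspace of `ℂ^d ⊗ ℂ^d`. -/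
noncomputable def Pplus (d : ℕ) : Matrix (Fin d × Fin d) (Fin d × Fin d) ℂ :=
  (2 : ℂ)⁻¹ • (1 + swapOp d)

/-- Projector onto the antisymmetric subspace of `ℂ^d ⊗ ℂ^d`. -/
noncomputable def Pminus (d : ℕ) : Matrix (Fin d × Fin d) (Fin d × Fin d) ℂ :=
  (2 : ℂ)⁻¹ • (1 - swapOp d)

/-- Partial trace over the first tensor factor. -/
noncomputable def ptr1 {d : ℕ} (Q : Matrix (Fin d × Fin d) (Fin d × Fin d) ℂ) :
    Matrix (Fin d) (Fin d) ℂ :=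
  fun j k => ∑ i, Q (i, j) (i, k)

/-- Partial trace over the second tensor factor. -/
noncomputable def ptr2 {d : ℕ} (Q : Matrix (Fin d × Fin d) (Fin d × Fin d) ℂ) :
    Matrix (Fin d) (Fin d) ℂ :=
  fun i j => ∑ k, Q (i, k) (j, k)

/-!
For `x` with `c = ‖x‖²` and `P = |x⟩⟨x|`, duality of the partial traces gives
`⟨x, Q̃ x⟩ = tr (Q T)` with `T = P ⊗ 1 + 1 ⊗ P`. Pauli exclusion says `P₋ T P₋ ≤ c P₋`:
indeed `c (c - T) = (c - P) ⊗ (c - P) - P ⊗ P`, the first term is positive and `P ⊗ P = |xx⟩⟨xx|`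
is killed by `P₋` because `x ⊗ x` is symmetric. As `Q` lives on `H₋`, this yields
`0 ≤ Q̃ ≤ tr Q`; since `tr Q̃ = 2 tr Q`, conjugating by `Q̃^{1/2}` gives `Q̃² ≤ ½ tr Q̃ · Q̃`.
-/

namespace Matrix

variable {𝕜 n : Type*} [RCLike 𝕜]

lemma PosSemidef.of_smul {A : Matrix n n 𝕜} {c : 𝕜} (hc : 0 < c)
    (h : (c • A).PosSemidef) : A.PosSemidef := by
  simpa [smul_smul, inv_mul_cancel₀ hc.ne'] using h.smul (inv_nonneg.mpr hc.le)

variable [Fintype n]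

lemma PosSemidef.trace_mul_nonneg [DecidableEq n] {A B : Matrix n n 𝕜} (hA : A.PosSemidef)
    (hB : B.PosSemidef) : 0 ≤ (A * B).trace := by
  open scoped MatrixOrder in
  obtain ⟨a, rfl⟩ := CStarAlgebra.nonneg_iff_eq_star_mul_self.mp hA.nonneg
  rw [mul_assoc, trace_mul_comm]
  exact (hB.mul_mul_conjTranspose_same a).trace_nonneg

lemma PosSemidef.smul_sub_mul_self [DecidableEq n] {A : Matrix n n 𝕜} {t : 𝕜}
    (hA : A.PosSemidef) (hle : (t • 1 - A).PosSemidef) : (t • A - A * A).PosSemidef := by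
  open scoped MatrixOrder in
  set s := CFC.sqrt A
  have hs : sᴴ = s := (CFC.sqrt_nonneg A).posSemidef.isHermitian.eq
  have hss : s * s = A := CFC.sqrt_mul_sqrt_self A hA.nonneg
  have hsAs : s * A * s = A * A := by rw [← hss]; simp only [mul_assoc]
  simpa only [hs, mul_sub, sub_mul, mul_smul_comm, mul_one, smul_mul_assoc, hss, hsAs] using
    hle.conjTranspose_mul_mul_same s

lemma dotProduct_mulVec_eq_trace_mul_vecMulVec (M : Matrix n n 𝕜) (x : n → 𝕜) :
    star x ⬝ᵥ (M *ᵥ x) = (M * vecMulVec x (star x)).trace := by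
  rw [mul_vecMulVec, trace_vecMulVec, dotProduct_comm]

lemma vecMulVec_mul_self (x : n → 𝕜) :
    vecMulVec x (star x) * vecMulVec x (star x) = (star x ⬝ᵥ x) • vecMulVec x (star x) := by
  rw [vecMulVec_mul_vecMulVec, vecMulVec_smul]

lemma posSemidef_smul_one_sub_vecMulVec [DecidableEq n] (x : n → 𝕜) :
    ((star x ⬝ᵥ x) • 1 - vecMulVec x (star x)).PosSemidef := by
  rcases eq_or_ne x 0 with rfl | hx
  · simp [PosSemidef.zero]
  set c := star x ⬝ᵥ x
  set P := vecMulVec x (star x)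
  have hP : Pᴴ = P := (posSemidef_vecMulVec_self_star x).isHermitian.eq
  have hc : star c = c := (IsSelfAdjoint.of_nonneg (dotProduct_star_self_nonneg x)).star_eq
  have hsq : (c • 1 - P)ᴴ * (c • 1 - P) = c • (c • 1 - P) := by
    rw [conjTranspose_sub, conjTranspose_smul, conjTranspose_one, hP, hc, sub_mul, mul_sub,
      mul_sub, vecMulVec_mul_self]
    simp only [smul_mul_assoc, mul_smul_comm, one_mul, mul_one, smul_sub, smul_smul]
    abel
  refine PosSemidef.of_smul (dotProduct_star_self_pos_iff.mpr hx) ?_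
  rw [← hsq]
  exact posSemidef_conjTranspose_mul_self _

end Matrix

section
variable {d : ℕ}

lemma trace_ptr1_mul (Q : Matrix (Fin d × Fin d) (Fin d × Fin d) ℂ) (B : Matrix (Fin d) (Fin d) ℂ) :
    (ptr1 Q * B).trace = (Q * (1 ⊗ₖ B)).trace := by
  simp only [trace, diag, mul_apply, ptr1, kronecker_apply, one_apply, Fintype.sum_prod_type,
    Finset.sum_mul, ite_mul, one_mul, zero_mul, mul_ite, mul_zero, Finset.sum_ite_irrel,
    Finset.sum_const_zero, Finset.sum_ite_eq', Finset.mem_univ, if_true]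
  exact (Finset.sum_congr rfl fun _ _ => Finset.sum_comm).trans Finset.sum_comm

lemma trace_ptr2_mul (Q : Matrix (Fin d × Fin d) (Fin d × Fin d) ℂ) (A : Matrix (Fin d) (Fin d) ℂ) :
    (ptr2 Q * A).trace = (Q * (A ⊗ₖ 1)).trace := by
  simp only [trace, diag, mul_apply, ptr2, kronecker_apply, one_apply, Fintype.sum_prod_type,
    Finset.sum_mul, mul_ite, mul_zero, mul_one, Finset.sum_ite_eq', Finset.mem_univ, if_true]
  exact Finset.sum_congr rfl fun _ _ => Finset.sum_comm

lemma trace_ptr1 (Q : Matrix (Fin d × Fin d) (Fin d × Fin d) ℂ) : (ptr1 Q).trace = Q.trace := by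
  simpa [one_kronecker_one] using trace_ptr1_mul Q 1

lemma trace_ptr2 (Q : Matrix (Fin d × Fin d) (Fin d × Fin d) ℂ) : (ptr2 Q).trace = Q.trace := by
  simpa [one_kronecker_one] using trace_ptr2_mul Q 1

lemma ptr1_eq_sum_submatrix (Q : Matrix (Fin d × Fin d) (Fin d × Fin d) ℂ) :
    ptr1 Q = ∑ i, Q.submatrix (Prod.mk i) (Prod.mk i) := by
  ext j k
  simp [ptr1, Matrix.sum_apply]

lemma ptr2_eq_sum_submatrix (Q : Matrix (Fin d × Fin d) (Fin d × Fin d) ℂ) :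
    ptr2 Q = ∑ k, Q.submatrix (fun i => (i, k)) (fun i => (i, k)) := by
  ext i j
  simp [ptr2, Matrix.sum_apply]

lemma Matrix.PosSemidef.ptr1 {Q : Matrix (Fin d × Fin d) (Fin d × Fin d) ℂ} (hQ : Q.PosSemidef) :
    (ptr1 Q).PosSemidef := by
  rw [ptr1_eq_sum_submatrix]
  exact posSemidef_sum _ fun i _ => hQ.submatrix _

lemma Matrix.PosSemidef.ptr2 {Q : Matrix (Fin d × Fin d) (Fin d × Fin d) ℂ} (hQ : Q.PosSemidef) :
    (ptr2 Q).PosSemidef := by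
  rw [ptr2_eq_sum_submatrix]
  exact posSemidef_sum _ fun i _ => hQ.submatrix _

lemma swapOp_mul_apply (M : Matrix (Fin d × Fin d) (Fin d × Fin d) ℂ) (p q : Fin d × Fin d) :
    (swapOp d * M) p q = M p.swap q := by
  rw [mul_apply, Finset.sum_eq_single p.swap]
  · simp [swapOp]
  · rintro r - hr
    rw [swapOp, if_neg, zero_mul]
    rintro ⟨h1, h2⟩
    exact hr (Prod.ext h2.symm h1.symm)
  · simp

lemma Pminus_mul_kronecker_vecMulVec (x y : Fin d → ℂ) :
    Pminus d * (vecMulVec x y ⊗ₖ vecMulVec x y) = 0 := by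
  have hswap : swapOp d * (vecMulVec x y ⊗ₖ vecMulVec x y) = vecMulVec x y ⊗ₖ vecMulVec x y := by
    ext ⟨i, j⟩ ⟨k, l⟩
    rw [swapOp_mul_apply]
    simp only [Prod.swap_prod_mk, kronecker_apply, vecMulVec_apply]
    ring
  rw [Pminus, smul_mul_assoc, sub_mul, one_mul, hswap, sub_self, smul_zero]

lemma isHermitian_swapOp : (swapOp d).IsHermitian := by
  ext p q
  have hiff : q.1 = p.2 ∧ q.2 = p.1 ↔ p.1 = q.2 ∧ p.2 = q.1 :=
    ⟨fun h => ⟨h.2.symm, h.1.symm⟩, fun h => ⟨h.2.symm, h.1.symm⟩⟩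
  simp only [conjTranspose_apply, swapOp, hiff]
  split_ifs <;> simp

lemma isHermitian_Pminus : (Pminus d).IsHermitian :=
  (isHermitian_one.sub isHermitian_swapOp).smul (by simp [isSelfAdjoint_iff])

/-- The second-quantised occupation number of the mode `x` (for `‖x‖ = 1`). -/
noncomputable def occupationOp (x : Fin d → ℂ) : Matrix (Fin d × Fin d) (Fin d × Fin d) ℂ :=
  vecMulVec x (star x) ⊗ₖ 1 + 1 ⊗ₖ vecMulVec x (star x)

lemma star_dotProduct_ptr1_add_ptr2_mulVec (Q : Matrix (Fin d × Fin d) (Fin d × Fin d) ℂ)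
    (x : Fin d → ℂ) :
    star x ⬝ᵥ ((ptr1 Q + ptr2 Q) *ᵥ x) = (Q * occupationOp x).trace := by
  rw [dotProduct_mulVec_eq_trace_mul_vecMulVec, add_mul, trace_add, trace_ptr1_mul,
    trace_ptr2_mul, occupationOp, mul_add, trace_add, add_comm]

lemma smul_one_sub_vecMulVec_kronecker_self (x : Fin d → ℂ) :
    ((star x ⬝ᵥ x) • 1 - vecMulVec x (star x)) ⊗ₖ ((star x ⬝ᵥ x) • 1 - vecMulVec x (star x)) =
      (star x ⬝ᵥ x) • ((star x ⬝ᵥ x) • 1 - occupationOp x) +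
        vecMulVec x (star x) ⊗ₖ vecMulVec x (star x) := by
  ext ⟨i, j⟩ ⟨k, l⟩
  simp only [occupationOp, kronecker_apply, Matrix.sub_apply, Matrix.add_apply, Matrix.smul_apply,
    one_apply, smul_eq_mul, Prod.mk.injEq, ite_and]
  split_ifs <;> ring

lemma posSemidef_Pminus_mul_sub_occupationOp_mul_Pminus (x : Fin d → ℂ) :
    (Pminus d * ((star x ⬝ᵥ x) • 1 - occupationOp x) * Pminus d).PosSemidef := by
  rcases eq_or_ne x 0 with rfl | hx
  · simp [occupationOp, PosSemidef.zero]
  set c := star x ⬝ᵥ x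
  have hS := posSemidef_smul_one_sub_vecMulVec x
  refine PosSemidef.of_smul (dotProduct_star_self_pos_iff.mpr hx) ?_
  have key : c • (Pminus d * (c • 1 - occupationOp x) * Pminus d) =
      Pminus d * ((c • 1 - vecMulVec x (star x)) ⊗ₖ (c • 1 - vecMulVec x (star x))) * Pminus d := by
    rw [smul_one_sub_vecMulVec_kronecker_self, mul_add, add_mul, Pminus_mul_kronecker_vecMulVec,
      zero_mul, add_zero, mul_smul_comm, smul_mul_assoc]
  rw [key]
  simpa only [isHermitian_Pminus.eq] using (hS.kronecker hS).conjTranspose_mul_mul_same (Pminus d)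

lemma trace_mul_eq_trace_mul_Pminus_conj {Q : Matrix (Fin d × Fin d) (Fin d × Fin d) ℂ}
    (hsupp : Pminus d * Q * Pminus d = Q) (X : Matrix (Fin d × Fin d) (Fin d × Fin d) ℂ) :
    (Q * X).trace = (Q * (Pminus d * X * Pminus d)).trace := by
  conv_lhs => rw [← hsupp]
  simp only [mul_assoc]
  rw [trace_mul_comm]
  simp only [mul_assoc]

lemma posSemidef_trace_smul_one_sub_ptr1_add_ptr2 {Q : Matrix (Fin d × Fin d) (Fin d × Fin d) ℂ}
    (hQ : Q.PosSemidef) (hsupp : Pminus d * Q * Pminus d = Q) :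
    (Q.trace • 1 - (ptr1 Q + ptr2 Q)).PosSemidef := by
  refine .of_dotProduct_mulVec_nonneg ?_ fun x => ?_
  · exact (isHermitian_one.smul (IsSelfAdjoint.of_nonneg hQ.trace_nonneg)).sub
      (hQ.ptr1.add hQ.ptr2).isHermitian
  have hform : star x ⬝ᵥ ((Q.trace • 1 - (ptr1 Q + ptr2 Q)) *ᵥ x) =
      (Q * ((star x ⬝ᵥ x) • 1 - occupationOp x)).trace := by
    rw [sub_mulVec, dotProduct_sub, star_dotProduct_ptr1_add_ptr2_mulVec, smul_mulVec, one_mulVec,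
      dotProduct_smul, mul_sub, trace_sub, mul_smul_comm, mul_one, trace_smul, smul_eq_mul,
      smul_eq_mul, mul_comm]
  rw [hform, trace_mul_eq_trace_mul_Pminus_conj hsupp]
  exact hQ.trace_mul_nonneg (posSemidef_Pminus_mul_sub_occupationOp_mul_Pminus x)

end

theorem stmt3_general {d : ℕ} (Q : Matrix (Fin d × Fin d) (Fin d × Fin d) ℂ)
    (hQ : Q.PosSemidef) (hsupp : Pminus d * Q * Pminus d = Q) :
    (((2 : ℂ)⁻¹ * (ptr1 Q + ptr2 Q).trace) • (ptr1 Q + ptr2 Q)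
        - (ptr1 Q + ptr2 Q) * (ptr1 Q + ptr2 Q)).PosSemidef := by
  have htrace : (2 : ℂ)⁻¹ * (ptr1 Q + ptr2 Q).trace = Q.trace := by
    rw [trace_add, trace_ptr1, trace_ptr2]
    ring
  rw [htrace]
  exact (hQ.ptr1.add hQ.ptr2).smul_sub_mul_self
    (posSemidef_trace_smul_one_sub_ptr1_add_ptr2 hQ hsupp)

/-- If `Q ≥ 0` is supported on the antisymmetric subspace of `ℂ^d ⊗ ℂ^d`
(`d ≥ 2`) and `Q̃ = tr₁ Q + tr₂ Q`, then `Q̃² ≤ (1/2)·tr(Q̃)·Q̃` as operators. -/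
theorem stmt3 {d : ℕ} (hd : 2 ≤ d) (Q : Matrix (Fin d × Fin d) (Fin d × Fin d) ℂ)
    (hQ : Q.PosSemidef) (hsupp : Pminus d * Q * Pminus d = Q) :
    (((2 : ℂ)⁻¹ * (ptr1 Q + ptr2 Q).trace) • (ptr1 Q + ptr2 Q)
        - (ptr1 Q + ptr2 Q) * (ptr1 Q + ptr2 Q)).PosSemidef :=
  stmt3_general Q hQ hsupp
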